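/- arXiv:1110.6263 — 7 statements merged into one kernel-verified Lean document; each statement's English description precedes it below -/
import Mathlib

section
/- Let Γ be an infinite connected d-regular graph, G a finite connected induced subgraph, and χ a stable sandpile configuration on G (each vertex has height between 1 and d). Fix v in G with χ(v) = d and let v_1, ..., v_k be a toppling sequence for the avalanche caused by adding a grain at v. If the vertices v_1, ..., v_k are not all distinct, then the first vertex that is repeated in the sequence is v itself. -/
/-! Let `u` be the first vertex toppled a second time, say at step `t`, and suppose `u ≠ v`.
The first `t` topplings are then of distinct vertices, so `u` has received at most
`deg u = d` grains from its neighbours, while it has already toppled once and lost `d`.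
Its height at step `t` is therefore at most `χ u ≤ d`, so it cannot be unstable. -/

open SimpleGraph

/-- The (not necessarily stable) configuration obtained from `χ` by adding one grain
at `v` and toppling, in order, the vertices of the list `l` (each toppling removes
`d` grains and sends one grain to each neighbor in the ambient graph `Γ`;
all toppled vertices are required to lie in the finite subgraph). -/
noncomputable def sandConf {V : Type*} [DecidableEq V] (Γ : SimpleGraph V)
    [DecidableRel Γ.Adj] (d : ℕ) (χ : V → ℤ) (v : V) (l : List V) (u : V) : ℤ :=
  χ u + (if u = v then 1 else 0)
    + ((l.countP fun w => decide (Γ.Adj w u) : ℕ) : ℤ) - (d : ℤ) * (l.count u : ℤ)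

/-- `l` is a toppling sequence for the avalanche caused by adding a grain at `v` to
the configuration `χ` on the induced subgraph of `Γ` on the vertex set `s`:
every toppled vertex lies in `s` and is unstable (height `> d`) at the moment it is
toppled, and the final configuration is stable on `s`. -/
def IsTopplingSeq {V : Type*} [DecidableEq V] (Γ : SimpleGraph V) [DecidableRel Γ.Adj]
    (d : ℕ) (s : Set V) (χ : V → ℤ) (v : V) (l : List V) : Prop :=
  (∀ x ∈ l, x ∈ s) ∧
  (∀ i : Fin l.length, (d : ℤ) < sandConf Γ d χ v (l.take i) (l.get i)) ∧
  (∀ u ∈ s, sandConf Γ d χ v l u ≤ d)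

/-- A configuration is stable on `s` when every height is between 1 and `d`. -/
def IsStableConf {V : Type*} (d : ℕ) (s : Set V) (χ : V → ℤ) : Prop :=
  ∀ u ∈ s, 1 ≤ χ u ∧ χ u ≤ (d : ℤ)

theorem List.nodup_take_of_getElem_notMem_take {α : Type*} {l : List α} {n : ℕ}
    (h : ∀ (i : ℕ) (hi : i < l.length), i < n → l[i] ∉ l.take i) : (l.take n).Nodup := by
  induction n with
  | zero => simp
  | succ n ih =>
    have ih' := ih fun i hi hin => h i hi (Nat.lt_succ_of_lt hin)
    by_cases hn : n < l.length
    · rw [List.take_succ_eq_append_getElem hn, List.nodup_append]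
      exact ⟨ih', List.nodup_singleton _, fun a ha b hb => by
        rw [List.mem_singleton.mp hb]; exact ne_of_mem_of_not_mem ha (h n hn n.lt_succ_self)⟩
    · have hlen : l.length ≤ n := not_lt.mp hn
      rwa [List.take_of_length_le (hlen.trans n.le_succ), ← List.take_of_length_le hlen]

theorem SimpleGraph.countP_adj_le_degree_of_nodup {V : Type*} (Γ : SimpleGraph V)
    [DecidableRel Γ.Adj] (u : V) [Fintype (Γ.neighborSet u)] {m : List V} (hm : m.Nodup) :
    m.countP (fun w => decide (Γ.Adj w u)) ≤ Γ.degree u := by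
  classical
  rw [List.countP_eq_length_filter, ← List.toFinset_card_of_nodup (hm.filter _),
    ← card_neighborFinset_eq_degree]
  refine Finset.card_le_card fun w hw => ?_
  simp only [List.mem_toFinset, List.mem_filter, decide_eq_true_eq] at hw
  exact (mem_neighborFinset Γ u w).mpr hw.2.symm

theorem sandConf_le_of_nodup {V : Type*} [DecidableEq V] {Γ : SimpleGraph V}
    [DecidableRel Γ.Adj] {d : ℕ} (χ : V → ℤ) {u v : V} [Fintype (Γ.neighborSet u)]
    (hdeg : Γ.degree u ≤ d) (huv : u ≠ v) {m : List V} (hm : m.Nodup) (hum : u ∈ m) :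
    sandConf Γ d χ v m u ≤ χ u := by
  have hneighbours : (m.countP fun w => decide (Γ.Adj w u) : ℤ) ≤ d := by
    exact_mod_cast (Γ.countP_adj_le_degree_of_nodup u hm).trans hdeg
  have hcount : (1 : ℤ) ≤ m.count u := by exact_mod_cast List.count_pos_iff.mpr hum
  have hloss : (d : ℤ) ≤ d * m.count u := le_mul_of_one_le_right (by positivity) hcount
  rw [sandConf, if_neg huv]
  linarith

theorem stmt_6_general {V : Type*} [DecidableEq V] (Γ : SimpleGraph V) [DecidableRel Γ.Adj]
    [Γ.LocallyFinite] (d : ℕ)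
    (hreg : Γ.IsRegularOfDegree d)
    (s : Set V)
    (χ : V → ℤ) (hstable : IsStableConf d s χ)
    (v : V)
    (l : List V) (hl : IsTopplingSeq Γ d s χ v l)
    (t : Fin l.length) (ht : l.get t ∈ l.take t)
    (hfirst : ∀ t' : Fin l.length, t' < t → l.get t' ∉ l.take t') :
    l.get t = v := by
  by_contra hne
  obtain ⟨hmem, hunstable, -⟩ := hl
  have hprefix : (l.take t).Nodup :=
    List.nodup_take_of_getElem_notMem_take fun i hi hit => hfirst ⟨i, hi⟩ hit
  have hs : l.get t ∈ s := hmem _ (List.get_mem l t)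
  have hle := sandConf_le_of_nodup χ (hreg _).le hne hprefix ht
  linarith [hunstable t, (hstable _ hs).2]

theorem stmt_6 {V : Type*} [DecidableEq V] (Γ : SimpleGraph V) [DecidableRel Γ.Adj]
    [Γ.LocallyFinite] (d : ℕ) (hconn : Γ.Connected) (hinf : Infinite V)
    (hreg : Γ.IsRegularOfDegree d)
    (s : Set V) (hsfin : s.Finite) (hsconn : (Γ.induce s).Connected)
    (χ : V → ℤ) (hstable : IsStableConf d s χ)
    (v : V) (hv : v ∈ s) (hχv : χ v = (d : ℤ))
    (l : List V) (hl : IsTopplingSeq Γ d s χ v l)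
    (hrep : ¬ l.Nodup)
    (t : Fin l.length) (ht : l.get t ∈ l.take t)
    (hfirst : ∀ t' : Fin l.length, t' < t → l.get t' ∉ l.take t') :
    l.get t = v :=
  stmt_6_general Γ d hreg s χ hstable v l hl t ht hfirst
end

section
/- Let Γ be an infinite connected d-regular graph, G a finite connected induced subgraph, χ a stable configuration on G, and v a vertex with χ(v) = d. Then v topples more than once in the avalanche caused by adding a grain at v if and only if v has exactly d neighbors in G and every neighbor of v topples. In particular, if the degree of v in G is less than d, then no vertex topples more than once in this avalanche. -/
open SimpleGraph

/-!
Look at the first time some vertex `u` topples for the second time. Up to then every vertex has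
toppled at most once, so `u` has received at most `deg u = d` grains, while it has already lost
`d` grains and started with at most `d`. It can only be unstable again if `u = v` (the vertex
that got the extra grain) and every neighbour of `v` has already toppled. Conversely, if every
neighbour of `v` topples, `v` receives `d` grains on top of its `d + 1`, and a single toppling
cannot bring it back to a stable height.
-/

theorem List.exists_eq_append_cons_nodup_mem_of_not_nodup {α : Type*} {l : List α}
    (hl : ¬ l.Nodup) : ∃ p a q, l = p ++ a :: q ∧ p.Nodup ∧ a ∈ p := by
  induction l using List.reverseRecOn with
  | nil => exact absurd List.nodup_nil hl
  | append_singleton l x ih =>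
    by_cases hnd : l.Nodup
    · refine ⟨l, x, [], rfl, hnd, ?_⟩
      by_contra hx
      refine hl (List.nodup_append.2 ⟨hnd, List.nodup_singleton x, fun a ha b hb hab => ?_⟩)
      exact hx (List.eq_of_mem_singleton hb ▸ hab ▸ ha)
    · obtain ⟨p, a, q, rfl, hp, ha⟩ := ih hnd
      exact ⟨p, a, q ++ [x], by simp, hp, ha⟩

section Degree

variable {V : Type*} [DecidableEq V] (Γ : SimpleGraph V) [DecidableRel Γ.Adj]
  [Γ.LocallyFinite] {p : List V} {u : V}

theorem List.Nodup.countP_adj_eq_card_inter (hp : p.Nodup) :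
    p.countP (Γ.Adj · u) = (p.toFinset ∩ Γ.neighborFinset u).card := by
  rw [List.countP_eq_length_filter, ← List.toFinset_card_of_nodup (hp.filter _),
    List.toFinset_filter]
  congr 1
  ext w
  simp [adj_comm]

theorem List.Nodup.countP_adj_le_degree (hp : p.Nodup) :
    p.countP (Γ.Adj · u) ≤ Γ.degree u := by
  rw [hp.countP_adj_eq_card_inter Γ, ← card_neighborFinset_eq_degree]
  exact Finset.card_le_card Finset.inter_subset_right

theorem List.Nodup.adj_mem_of_countP_adj_eq_degree (hp : p.Nodup)
    (h : p.countP (Γ.Adj · u) = Γ.degree u) {w : V} (hw : Γ.Adj u w) : w ∈ p := by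
  rw [hp.countP_adj_eq_card_inter Γ, ← card_neighborFinset_eq_degree] at h
  have hsub :=
    Finset.inter_eq_right.1 (Finset.eq_of_subset_of_card_le Finset.inter_subset_right h.ge)
  exact List.mem_toFinset.1 (hsub ((mem_neighborFinset Γ u w).2 hw))

theorem SimpleGraph.degree_le_countP_adj (h : ∀ w, Γ.Adj u w → w ∈ p) :
    Γ.degree u ≤ p.countP (Γ.Adj · u) := by
  rw [List.countP_eq_length_filter, ← card_neighborFinset_eq_degree]
  calc (Γ.neighborFinset u).card
      ≤ (p.filter (Γ.Adj · u)).toFinset.card := Finset.card_le_card fun w hw => by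
        rw [mem_neighborFinset] at hw
        simpa [hw.symm] using h w hw
    _ ≤ (p.filter (Γ.Adj · u)).length := List.toFinset_card_le _

end Degree

namespace IsTopplingSeq

variable {V : Type*} [DecidableEq V] {Γ : SimpleGraph V} [DecidableRel Γ.Adj] {d : ℕ}
  {s : Set V} {χ : V → ℤ} {v : V} {l : List V}

theorem lt_sandConf_of_eq_append (hl : IsTopplingSeq Γ d s χ v l) {p q : List V} {a : V}
    (h : l = p ++ a :: q) : (d : ℤ) < sandConf Γ d χ v p a := by
  subst h
  simpa using hl.2.1 ⟨p.length, by simp⟩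

theorem adj_mem_of_not_nodup [Γ.LocallyFinite] (hreg : Γ.IsRegularOfDegree d)
    (hχ : ∀ u ∈ s, χ u ≤ d) (hl : IsTopplingSeq Γ d s χ v l) (hdup : ¬ l.Nodup) {w : V}
    (hw : Γ.Adj v w) : w ∈ l := by
  -- `a` is the first vertex to topple a second time, `p` the topplings before that
  obtain ⟨p, a, q, rfl, hp, ha⟩ := List.exists_eq_append_cons_nodup_mem_of_not_nodup hdup
  have hunstable := hl.lt_sandConf_of_eq_append rfl
  have hreceived : (p.countP (Γ.Adj · a) : ℤ) ≤ d := by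
    exact_mod_cast hreg a ▸ hp.countP_adj_le_degree Γ
  have hlost : (d : ℤ) ≤ d * p.count a :=
    le_mul_of_one_le_right (by positivity) (by exact_mod_cast List.count_pos_iff.2 ha)
  have hχa : χ a ≤ d := hχ a (hl.1 a (by simp))
  obtain rfl : a = v := by
    by_contra hav
    simp only [sandConf, if_neg hav] at hunstable
    linarith
  have hall : p.countP (Γ.Adj · a) = Γ.degree a := by
    simp only [sandConf, if_pos] at hunstable
    rw [hreg a]
    exact_mod_cast le_antisymm hreceived (by linarith)
  exact List.mem_append_left _ (hp.adj_mem_of_countP_adj_eq_degree Γ hall hw)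

theorem one_lt_count_of_adj_mem [Γ.LocallyFinite] (hreg : Γ.IsRegularOfDegree d)
    (hv : v ∈ s) (hχv : (d : ℤ) ≤ χ v) (hl : IsTopplingSeq Γ d s χ v l)
    (h : ∀ w, Γ.Adj v w → w ∈ l) : 1 < l.count v := by
  have hstable := hl.2.2 v hv
  have hreceived : (d : ℤ) ≤ l.countP (Γ.Adj · v) := by
    exact_mod_cast hreg v ▸ degree_le_countP_adj Γ h
  simp only [sandConf, if_pos] at hstable
  by_contra! hc
  have : (d : ℤ) * l.count v ≤ d :=
    mul_le_of_le_one_right (by positivity) (by exact_mod_cast hc)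
  linarith

end IsTopplingSeq

theorem stmt_7_general {V : Type*} [DecidableEq V] (Γ : SimpleGraph V) [DecidableRel Γ.Adj]
    [Γ.LocallyFinite] (d : ℕ)
    (hreg : Γ.IsRegularOfDegree d)
    (s : Set V)
    (χ : V → ℤ) (hstable : IsStableConf d s χ)
    (v : V) (hv : v ∈ s) (hχv : χ v = (d : ℤ))
    (l : List V) (hl : IsTopplingSeq Γ d s χ v l) :
    (1 < l.count v ↔ ((∀ u, Γ.Adj v u → u ∈ s) ∧ ∀ u, Γ.Adj v u → u ∈ l)) ∧
    ((∃ u, Γ.Adj v u ∧ u ∉ s) → ∀ u, l.count u ≤ 1) := by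
  have hχ : ∀ u ∈ s, χ u ≤ d := fun u hu => (hstable u hu).2
  have hneighbors (hdup : ¬ l.Nodup) : ∀ u, Γ.Adj v u → u ∈ l :=
    fun _ hu => hl.adj_mem_of_not_nodup hreg hχ hdup hu
  refine ⟨⟨fun hcount => ?_, fun ⟨_, hmem⟩ => ?_⟩, ?_⟩
  · have hdup : ¬ l.Nodup := fun hnd => (List.nodup_iff_count_le_one.1 hnd v).not_gt hcount
    exact ⟨fun u hu => hl.1 u (hneighbors hdup u hu), hneighbors hdup⟩
  · exact hl.one_lt_count_of_adj_mem hreg hv hχv.ge hmem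
  · rintro ⟨u, hu, hus⟩
    refine List.nodup_iff_count_le_one.1 (by_contra fun hdup => hus ?_)
    exact hl.1 u (hneighbors hdup u hu)

theorem stmt_7 {V : Type*} [DecidableEq V] (Γ : SimpleGraph V) [DecidableRel Γ.Adj]
    [Γ.LocallyFinite] (d : ℕ) (hconn : Γ.Connected) (hinf : Infinite V)
    (hreg : Γ.IsRegularOfDegree d)
    (s : Set V) (hsfin : s.Finite) (hsconn : (Γ.induce s).Connected)
    (χ : V → ℤ) (hstable : IsStableConf d s χ)
    (v : V) (hv : v ∈ s) (hχv : χ v = (d : ℤ))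
    (l : List V) (hl : IsTopplingSeq Γ d s χ v l) :
    (1 < l.count v ↔ ((∀ u, Γ.Adj v u → u ∈ s) ∧ ∀ u, Γ.Adj v u → u ∈ l)) ∧
    ((∃ u, Γ.Adj v u ∧ u ∉ s) → ∀ u, l.count u ≤ 1) :=
  stmt_7_general Γ d hreg s χ hstable v hv hχv l hl
end

section
/- Let G be a finite connected subgraph of an infinite connected d-regular graph, χ a stable configuration, v a vertex with χ(v) = d, and v_1, ..., v_k a toppling sequence for the avalanche caused by adding a grain at v. For each t with 1 ≤ t ≤ k, the set S_t = {v_s : 1 ≤ s ≤ t} induces a connected subgraph of G containing v. -/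
open SimpleGraph

/-!
Every vertex other than `v` starts at height at most `d`, so the first vertex to topple is `v`.
A vertex `w ≠ v` that topples for the first time has received grains only from neighbours that
toppled before it, so it is adjacent to one of them. Hence each `S_t` is `S_{t-1}` or `S_{t-1}`
with one vertex adjacent to it added, and connectivity propagates from `S_1 = {v}`.
-/

namespace SimpleGraph

variable {V : Type*} {G : SimpleGraph V}

lemma Connected.induce_union_singleton_of_adj {s : Set V} {x w : V}
    (hs : (G.induce s).Connected) (hx : x ∈ s) (hxw : G.Adj x w) :
    (G.induce (s ∪ {w})).Connected :=
  connected_induce_union hs.preconnected (by simp [Preconnected.of_subsingleton]) hx rfl hxw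

lemma connected_induce_take {l : List V}
    (hl : ∀ i (hi : i < l.length), 0 < i → l[i] ∉ l.take i → ∃ x ∈ l.take i, G.Adj x l[i])
    {t : ℕ} (ht1 : 1 ≤ t) (ht2 : t ≤ l.length) :
    (G.induce {u | u ∈ l.take t}).Connected := by
  induction t, ht1 using Nat.le_induction with
  | base =>
    obtain ⟨a, l, rfl⟩ := List.exists_cons_of_length_pos ht2
    have hsingle : {u | u ∈ (a :: l).take 1} = {a} := by ext; simp
    rw [hsingle, induce_singleton_eq_top]
    exact connected_top
  | succ n hn ih =>
    have hnl : n < l.length := ht2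
    have htake : {u | u ∈ l.take (n + 1)} = {u | u ∈ l.take n} ∪ {l[n]} := by
      ext u
      simp only [Set.mem_union, Set.mem_singleton_iff, Set.mem_ofPred_eq, List.take_add_one,
        List.getElem?_eq_getElem hnl, Option.toList_some, List.mem_append, List.mem_singleton]
    rw [htake]
    by_cases hold : l[n] ∈ l.take n
    · rw [Set.union_eq_self_of_subset_right (by simpa using hold)]
      exact ih hnl.le
    · obtain ⟨x, hx, hxw⟩ := hl n hnl hn hold
      exact (ih hnl.le).induce_union_singleton_of_adj hx hxw

end SimpleGraph

section Sandpile

variable {V : Type*} [DecidableEq V] {Γ : SimpleGraph V} [DecidableRel Γ.Adj] {d : ℕ}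
  {χ : V → ℤ} {v : V}

/-- Until a vertex `w ≠ v` topples for the first time, its height only grows through grains
received from toppled neighbours. -/
lemma exists_adj_of_lt_sandConf {l : List V} {w : V} (hwl : w ∉ l) (hwv : w ≠ v)
    (hχw : χ w ≤ d) (hunst : (d : ℤ) < sandConf Γ d χ v l w) : ∃ x ∈ l, Γ.Adj x w := by
  have hcount : 0 < l.countP fun x => decide (Γ.Adj x w) := by
    rw [sandConf, if_neg hwv, List.count_eq_zero.mpr hwl] at hunst
    omega
  simpa using List.countP_pos_iff.mp hcount

variable {s : Set V} {l : List V}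

lemma IsTopplingSeq.exists_adj_of_notMem_take (hl : IsTopplingSeq Γ d s χ v l)
    (hχ : ∀ u ∈ s, χ u ≤ d) (i : ℕ) (hi : i < l.length) (hnew : l[i] ∉ l.take i) :
    l[i] = v ∨ ∃ x ∈ l.take i, Γ.Adj x l[i] := by
  by_cases hv : l[i] = v
  · exact .inl hv
  · exact .inr <| exists_adj_of_lt_sandConf hnew hv (hχ _ (hl.1 _ (List.getElem_mem hi)))
      (hl.2.1 ⟨i, hi⟩)

lemma IsTopplingSeq.getElem_zero (hl : IsTopplingSeq Γ d s χ v l) (hχ : ∀ u ∈ s, χ u ≤ d)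
    (h0 : 0 < l.length) : l[0] = v := by
  simpa using hl.exists_adj_of_notMem_take hχ 0 h0 (by simp)

end Sandpile

theorem stmt_8_general {V : Type*} [DecidableEq V] (Γ : SimpleGraph V) [DecidableRel Γ.Adj]
    (d : ℕ) (s : Set V) (χ : V → ℤ) (hstable : IsStableConf d s χ) (v : V)
    (l : List V) (hl : IsTopplingSeq Γ d s χ v l)
    (t : ℕ) (ht1 : 1 ≤ t) (ht2 : t ≤ l.length) :
    v ∈ {u | u ∈ l.take t} ∧ (Γ.induce {u | u ∈ l.take t}).Connected := by
  have hχ : ∀ u ∈ s, χ u ≤ d := fun u hu => (hstable u hu).2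
  have hl0 : 0 < l.length := by omega
  have hv : v = l[0] := (hl.getElem_zero hχ hl0).symm
  have hv_take : ∀ i, 0 < i → v ∈ l.take i := fun i hi => by
    rw [hv, List.mem_take_iff_getElem]
    exact ⟨0, by omega, rfl⟩
  refine ⟨hv_take t ht1, connected_induce_take (fun i hi hi0 hnew => ?_) ht1 ht2⟩
  refine (hl.exists_adj_of_notMem_take hχ i hi hnew).resolve_left fun hiv => ?_
  exact hnew (hiv ▸ hv_take i hi0)

theorem stmt_8 {V : Type*} [DecidableEq V] (Γ : SimpleGraph V) [DecidableRel Γ.Adj]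
    [Γ.LocallyFinite] (d : ℕ) (hconn : Γ.Connected) (hinf : Infinite V)
    (hreg : Γ.IsRegularOfDegree d)
    (s : Set V) (hsfin : s.Finite) (hsconn : (Γ.induce s).Connected)
    (χ : V → ℤ) (hstable : IsStableConf d s χ)
    (v : V) (hv : v ∈ s) (hχv : χ v = (d : ℤ))
    (l : List V) (hl : IsTopplingSeq Γ d s χ v l)
    (t : ℕ) (ht1 : 1 ≤ t) (ht2 : t ≤ l.length) :
    v ∈ {u | u ∈ l.take t} ∧ (Γ.induce {u | u ∈ l.take t}).Connected :=
  stmt_8_general Γ d s χ hstable v l hl t ht1 ht2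
end

section
/- Let G be a finite graph with origin o, χ a stable configuration with χ(o) = d, and suppose v_1, ..., v_k is a toppling sequence for the avalanche caused by adding a grain at o in which no vertex appears more than once. If 1 ≤ i < j ≤ k and v_j is not adjacent to v_m for every m with i ≤ m < j, then the reordered sequence v_1, ..., v_{i-1}, v_j, v_i, ..., v_{j-1}, v_{j+1}, ..., v_k is also a toppling sequence for the same avalanche. -/
open SimpleGraph

/-! Toppling `x` changes only the heights of `x` and of its neighbours, and the configuration
reached after toppling a list of vertices depends only on the multiset of toppled vertices.
Hence, if `x = v_j` is neither adjacent to nor among `b = v_i, …, v_{j-1}`, toppling `x` before `b`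
leaves the height `x` sees unchanged (no grain from `b` reaches it), as well as the heights each
vertex of `b` sees (no grain from `x` reaches them); from `v_{j+1}` on, the same multiset has been
toppled in either order. -/

lemma List.eq_take_append_take_drop_append_cons {α : Type*} (l : List α) {i j : ℕ} (hij : i ≤ j)
    (hj : j < l.length) :
    l = l.take i ++ (l.drop i).take (j - i) ++ l[j] :: l.drop (j + 1) := by
  conv_lhs => rw [← l.take_append_drop i, ← (l.drop i).take_append_drop (j - i)]
  rw [List.drop_drop, Nat.add_sub_cancel' hij, List.drop_eq_getElem_cons hj, List.append_assoc]

lemma List.exists_getElem_of_mem_take_drop {α : Type*} {l : List α} {i k : ℕ} {w : α}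
    (hw : w ∈ (l.drop i).take k) : ∃ m, ∃ hm : m < l.length, i ≤ m ∧ m < i + k ∧ l[m] = w := by
  obtain ⟨t, ht, rfl⟩ := List.getElem_of_mem hw
  simp only [List.length_take, List.length_drop, lt_min_iff] at ht
  exact ⟨i + t, by omega, by omega, by omega, by simp⟩

section

variable {V : Type*} [DecidableEq V] (Γ : SimpleGraph V) [DecidableRel Γ.Adj]
  (d : ℕ) (χ : V → ℤ) (v : V)

lemma sandConf_perm {l₁ l₂ : List V} (h : l₁.Perm l₂) (u : V) :
    sandConf Γ d χ v l₁ u = sandConf Γ d χ v l₂ u := by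
  unfold sandConf
  rw [h.countP_eq, h.count_eq]

lemma sandConf_append_of_notMem {u : V} {q : List V} (hu : u ∉ q)
    (hadj : ∀ w ∈ q, ¬ Γ.Adj w u) (p : List V) :
    sandConf Γ d χ v (p ++ q) u = sandConf Γ d χ v p u := by
  have hq : q.countP (fun w => decide (Γ.Adj w u)) = 0 :=
    List.countP_eq_zero.2 (by simpa using hadj)
  simp [sandConf, hq, List.count_eq_zero.2 hu]

def LegalFrom : List V → List V → Prop
  | _, [] => True
  | p, y :: q => (d : ℤ) < sandConf Γ d χ v p y ∧ LegalFrom (p ++ [y]) q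

variable {Γ d χ v}

lemma legalFrom_append (p q r : List V) :
    LegalFrom Γ d χ v p (q ++ r) ↔ LegalFrom Γ d χ v p q ∧ LegalFrom Γ d χ v (p ++ q) r := by
  induction q generalizing p with
  | nil => simp [LegalFrom]
  | cons y q ih => simp [LegalFrom, ih, and_assoc]

lemma LegalFrom.of_perm {p p' q : List V} (hp : p.Perm p') (h : LegalFrom Γ d χ v p q) :
    LegalFrom Γ d χ v p' q := by
  induction q generalizing p p' with
  | nil => trivial
  | cons y q ih => exact ⟨sandConf_perm Γ d χ v hp y ▸ h.1, ih (hp.append_right [y]) h.2⟩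

lemma LegalFrom.append_singleton {p q : List V} {x : V} (hx : x ∉ q)
    (hadj : ∀ w ∈ q, ¬ Γ.Adj x w) (h : LegalFrom Γ d χ v p q) :
    LegalFrom Γ d χ v (p ++ [x]) q := by
  induction q generalizing p with
  | nil => trivial
  | cons y q ih =>
    rw [List.mem_cons, not_or] at hx
    refine ⟨?_, ?_⟩
    · rw [sandConf_append_of_notMem Γ d χ v (by simpa [eq_comm] using hx.1)
        (by simpa using hadj y List.mem_cons_self)]
      exact h.1
    · refine (ih hx.2 (fun w hw => hadj w (List.mem_cons_of_mem y hw)) h.2).of_perm ?_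
      simpa using (List.Perm.swap x y []).append_left p

lemma legalFrom_iff_forall_fin (p l : List V) :
    LegalFrom Γ d χ v p l ↔
      ∀ i : Fin l.length, (d : ℤ) < sandConf Γ d χ v (p ++ l.take i) (l.get i) := by
  induction l generalizing p with
  | nil => simp [LegalFrom]
  | cons y l ih => simp [LegalFrom, Fin.forall_fin_succ, ih]

lemma isTopplingSeq_iff {s : Set V} {l : List V} :
    IsTopplingSeq Γ d s χ v l ↔
      (∀ x ∈ l, x ∈ s) ∧ LegalFrom Γ d χ v [] l ∧ ∀ u ∈ s, sandConf Γ d χ v l u ≤ d := by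
  simp [IsTopplingSeq, legalFrom_iff_forall_fin]

theorem IsTopplingSeq.move_before {s : Set V} {a b c : List V} {x : V}
    (h : IsTopplingSeq Γ d s χ v (a ++ b ++ x :: c)) (hx : x ∉ b)
    (hadj : ∀ w ∈ b, ¬ Γ.Adj x w) :
    IsTopplingSeq Γ d s χ v (a ++ [x] ++ b ++ c) := by
  have hswap : (a ++ b ++ [x]).Perm (a ++ [x] ++ b) := by
    simpa using (List.perm_append_comm (l₁ := b) (l₂ := [x])).append_left a
  have hmove : (a ++ [x] ++ b ++ c).Perm (a ++ b ++ x :: c) := by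
    simpa using List.perm_middle.symm.append_left a
  rw [isTopplingSeq_iff] at h ⊢
  obtain ⟨hs, hlegal, hstab⟩ := h
  simp only [legalFrom_append, LegalFrom, List.nil_append] at hlegal ⊢
  obtain ⟨⟨ha, hb⟩, hxb, hc⟩ := hlegal
  have hxa : sandConf Γ d χ v (a ++ b) x = sandConf Γ d χ v a x :=
    sandConf_append_of_notMem Γ d χ v hx (fun w hw hwx => hadj w hw hwx.symm) a
  refine ⟨fun y hy => hs y (hmove.mem_iff.1 hy),
    ⟨⟨⟨ha, hxa ▸ hxb, trivial⟩, hb.append_singleton hx hadj⟩, hc.of_perm hswap⟩, fun u hu => ?_⟩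
  exact sandConf_perm Γ d χ v hmove u ▸ hstab u hu

end

theorem stmt_9_general {V : Type*} [DecidableEq V]
    (Γ : SimpleGraph V) [DecidableRel Γ.Adj] (d : ℕ)
    (χ : V → ℤ)
    (o : V)
    (l : List V) (hl : IsTopplingSeq Γ d Set.univ χ o l) (hnd : l.Nodup)
    (i j : Fin l.length) (hij : i < j)
    (hnadj : ∀ m : Fin l.length, i ≤ m → m < j → ¬ Γ.Adj (l.get j) (l.get m)) :
    IsTopplingSeq Γ d Set.univ χ o
      (l.take i ++ [l.get j] ++ (l.drop i).take (j - i) ++ l.drop (j + 1)) := by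
  have hbetween : ∀ w ∈ (l.drop i).take (j - i),
      ∃ m : Fin l.length, i ≤ m ∧ m < j ∧ l.get m = w := by
    intro w hw
    obtain ⟨m, hm, him, hmj, rfl⟩ := List.exists_getElem_of_mem_take_drop hw
    exact ⟨⟨m, hm⟩, him, Fin.mk_lt_of_lt_val (by have := Fin.lt_def.1 hij; omega), rfl⟩
  rw [l.eq_take_append_take_drop_append_cons hij.le j.isLt] at hl
  refine hl.move_before (fun hj => ?_) fun w hw => ?_
  · obtain ⟨m, -, hmj, hm⟩ := hbetween _ hj
    exact hmj.ne (hnd.get_inj_iff.1 hm)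
  · obtain ⟨m, him, hmj, rfl⟩ := hbetween w hw
    exact hnadj m him hmj

theorem stmt_9 {V : Type*} [DecidableEq V] [Fintype V]
    (Γ : SimpleGraph V) [DecidableRel Γ.Adj] (d : ℕ)
    (χ : V → ℤ) (hstable : IsStableConf d Set.univ χ)
    (o : V) (hχo : χ o = (d : ℤ))
    (l : List V) (hl : IsTopplingSeq Γ d Set.univ χ o l) (hnd : l.Nodup)
    (i j : Fin l.length) (hij : i < j)
    (hnadj : ∀ m : Fin l.length, i ≤ m → m < j → ¬ Γ.Adj (l.get j) (l.get m)) :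
    IsTopplingSeq Γ d Set.univ χ o
      (l.take i ++ [l.get j] ++ (l.drop i).take (j - i) ++ l.drop (j + 1)) :=
  stmt_9_general Γ d χ o l hl hnd i j hij hnadj
end

section
/- Let G be a finite tree rooted at o, viewed as a subgraph of an infinite connected d-regular graph, and let χ be a stable sandpile configuration with χ(o) = d. Organize a toppling sequence for the avalanche caused by adding a grain at o into waves, toppling o only when it is the only vertex with more than d grains. Then every vertex other than o that topples in the avalanche topples already in the first wave. -/
open SimpleGraph

/-!
Count topplings over a window `[a, t)` that starts at a time `a` at which every vertex but the
root `o` is stable. A vertex that topples at time `t` has gained more than `d` grains per own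
toppling since `a`; as it has at most `d - 1` children, each toppling at most as often as it
does, induction on `t` shows that no vertex topples more often than its parent, hence than `o`.
Since `χ o = d`, the root can topple again only once all of its neighbours have toppled as often
as it has.

Waves shrink: if `v` topples in a wave but not in the previous one, with `v` of minimal depth,
then its parent `p` topples before `v` in that wave, hence also in the previous wave. At the
first toppling of `p` in the current wave, counted from the start of the previous wave, `p` has
toppled and `v` has not, which forces the grandparent to have toppled at least three times,
whereas `o` has toppled only twice. Hence every vertex first topples in the first wave.
-/

namespace SimpleGraph

variable {V : Type*} {Γ : SimpleGraph V}

/-- The parent of `v` in the tree rooted at `o`; unspecified at `v = o`. -/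
noncomputable def stepToward (Γ : SimpleGraph V) (o v : V) : V :=
  @Classical.epsilon V ⟨v⟩ fun p => Γ.Adj v p ∧ Γ.dist o p + 1 = Γ.dist o v

lemma Connected.exists_adj_dist_add_one_eq (hconn : Γ.Connected) (o : V) {v : V} (hv : v ≠ o) :
    ∃ p, Γ.Adj v p ∧ Γ.dist o p + 1 = Γ.dist o v := by
  obtain ⟨P, hP⟩ := hconn.exists_walk_length_eq_dist v o
  cases P with
  | nil => exact absurd rfl hv
  | @cons _ p _ h q =>
    refine ⟨p, h, ?_⟩
    have hq : Γ.dist p o ≤ q.length := dist_le q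
    have hvp := h.symm.diff_dist_adj (u := o)
    rw [Walk.length_cons] at hP
    rw [dist_comm] at hq hP
    omega

lemma Connected.stepToward_spec (hconn : Γ.Connected) (o : V) {v : V} (hv : v ≠ o) :
    Γ.Adj v (Γ.stepToward o v) ∧ Γ.dist o (Γ.stepToward o v) + 1 = Γ.dist o v :=
  Classical.epsilon_spec (hconn.exists_adj_dist_add_one_eq o hv)

lemma IsTree.eq_of_adj_of_dist_add_one_eq (htree : Γ.IsTree) (o : V) {v p q : V}
    (hp : Γ.Adj v p) (hpd : Γ.dist o p + 1 = Γ.dist o v)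
    (hq : Γ.Adj v q) (hqd : Γ.dist o q + 1 = Γ.dist o v) : p = q := by
  obtain ⟨P, hP⟩ := htree.connected.exists_walk_length_eq_dist o p
  obtain ⟨Q, hQ⟩ := htree.connected.exists_walk_length_eq_dist o q
  have hPv : (P.concat hp.symm).IsPath :=
    Walk.isPath_of_length_eq_dist _ (by rw [Walk.length_concat, hP, hpd])
  have hQv : (Q.concat hq.symm).IsPath :=
    Walk.isPath_of_length_eq_dist _ (by rw [Walk.length_concat, hQ, hqd])
  exact (Walk.concat_inj ((htree.existsUnique_path o v).unique hPv hQv)).1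

lemma IsTree.stepToward_of_adj_of_ne_stepToward (htree : Γ.IsTree) {o u c : V} (hu : u ≠ o)
    (hc : Γ.Adj u c) (hne : c ≠ Γ.stepToward o u) : c ≠ o ∧ Γ.stepToward o c = u := by
  obtain ⟨hadj, hdist⟩ := htree.connected.stepToward_spec o hu
  rcases htree.dist_eq_dist_add_one_of_adj o hc with h | h
  · exact absurd (htree.eq_of_adj_of_dist_add_one_eq o hc h.symm hadj hdist) hne
  · have hco : c ≠ o := by rintro rfl; simp at h
    obtain ⟨hadj', hdist'⟩ := htree.connected.stepToward_spec o hco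
    exact ⟨hco, htree.eq_of_adj_of_dist_add_one_eq o hadj' hdist' hc.symm h.symm⟩

end SimpleGraph

section Topplings

variable {V : Type*} [DecidableEq V] {l : List V} {v : V}

def topplings (l : List V) (t : ℕ) (v : V) : ℤ := ((l.take t).count v : ℤ)

def topplingsIn (l : List V) (a t : ℕ) (v : V) : ℤ := topplings l t v - topplings l a v

lemma topplings_zero : topplings l 0 v = 0 := by simp [topplings]

lemma topplings_nonneg (t : ℕ) : 0 ≤ topplings l t v := by simp [topplings]

lemma topplings_mono {s t : ℕ} (h : s ≤ t) : topplings l s v ≤ topplings l t v := by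
  unfold topplings
  exact_mod_cast ((List.take_prefix_take_left h).sublist.count_le v)

lemma topplingsIn_nonneg {a t : ℕ} (h : a ≤ t) : 0 ≤ topplingsIn l a t v :=
  sub_nonneg.2 (topplings_mono h)

lemma topplings_succ {t : ℕ} (ht : t < l.length) :
    topplings l (t + 1) v = topplings l t v + if l[t] = v then 1 else 0 := by
  simp only [topplings, List.take_add_one, List.getElem?_eq_getElem ht, Option.toList_some,
    List.count_append, List.count_singleton, beq_iff_eq]
  split_ifs <;> simp

lemma exists_getElem_eq_of_topplings_lt {a b : ℕ} {m : ℤ} (hb : b ≤ l.length)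
    (ha : topplings l a v ≤ m) (hm : m < topplings l b v) :
    ∃ i, ∃ hi : i < l.length, a ≤ i ∧ i < b ∧ l[i] = v ∧ topplings l i v = m := by
  induction b with
  | zero => linarith [topplings_nonneg (l := l) (v := v) a, topplings_zero (l := l) (v := v)]
  | succ b ih =>
    have hbl : b < l.length := hb
    rcases lt_or_ge m (topplings l b v) with h | h
    · obtain ⟨i, hi, hai, hib, hiv, him⟩ := ih hbl.le h
      exact ⟨i, hi, hai, by omega, hiv, him⟩
    · rw [topplings_succ hbl] at hm
      have hbv : l[b] = v := by by_contra hne; rw [if_neg hne] at hm; linarith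
      rw [if_pos hbv] at hm
      have hab : a ≤ b := by
        by_contra! hba
        have hle := topplings_mono (l := l) (v := v) (Nat.succ_le_of_lt hba)
        rw [topplings_succ hbl, if_pos hbv] at hle
        linarith
      exact ⟨b, hbl, hab, by omega, hbv, by linarith⟩

end Topplings

section Sandpile

variable {V : Type*} [DecidableEq V] [Fintype V] {Γ : SimpleGraph V} [DecidableRel Γ.Adj]
  {d : ℕ} {χ : V → ℤ} {o : V} {l : List V}

lemma countP_adj_eq_sum_count (L : List V) (u : V) :
    L.countP (fun w => decide (Γ.Adj w u)) = ∑ x ∈ Γ.neighborFinset u, L.count x := by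
  induction L with
  | nil => simp
  | cons a L ih =>
    simp [List.countP_cons, List.count_cons, Finset.sum_add_distrib, ih, Γ.adj_comm u a]

lemma sandConf_take (t : ℕ) (u : V) :
    sandConf Γ d χ o (l.take t) u = χ u + (if u = o then 1 else 0)
      + ∑ x ∈ Γ.neighborFinset u, topplings l t x - d * topplings l t u := by
  simp [sandConf, topplings, countP_adj_eq_sum_count]

lemma mul_topplingsIn_lt_sum {a t : ℕ} {v : V} (ha : sandConf Γ d χ o (l.take a) v ≤ d)
    (ht : (d : ℤ) < sandConf Γ d χ o (l.take t) v) :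
    d * topplingsIn l a t v < ∑ x ∈ Γ.neighborFinset v, topplingsIn l a t x := by
  rw [sandConf_take] at ha ht
  simp only [topplingsIn, Finset.sum_sub_distrib]
  linarith

lemma SimpleGraph.Connected.mem_erase_stepToward_stepToward (hconn : Γ.Connected) {v : V}
    (hv : v ≠ o) (hp : Γ.stepToward o v ≠ o) :
    v ∈ (Γ.neighborFinset (Γ.stepToward o v)).erase (Γ.stepToward o (Γ.stepToward o v)) := by
  obtain ⟨hadj, hdist⟩ := hconn.stepToward_spec o hv
  refine Finset.mem_erase.2 ⟨fun h => ?_, (mem_neighborFinset _ _ _).2 hadj.symm⟩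
  have := (hconn.stepToward_spec o hp).2
  rw [← h] at this
  omega

variable (Γ d χ o) in
def IsStableOffRoot (L : List V) : Prop := ∀ v, v ≠ o → sandConf Γ d χ o L v ≤ d

variable (Γ d χ o) in
def TopplesLegally (l : List V) : Prop :=
  ∀ t (ht : t < l.length), (d : ℤ) < sandConf Γ d χ o (l.take t) l[t]

namespace SimpleGraph.IsTree

/-- Going from stable to unstable, `v` gains more than `d` grains per own toppling; its at most
`d - 1` children supply at most that much each, less their lag behind `v`. -/
lemma topplingsIn_add_sum_lt_stepToward (htree : Γ.IsTree) (hdeg : ∀ u, Γ.degree u ≤ d)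
    {a t : ℕ} {v : V} (hv : v ≠ o) (hat : a ≤ t) (ha : sandConf Γ d χ o (l.take a) v ≤ d)
    (ht : (d : ℤ) < sandConf Γ d χ o (l.take t) v) :
    topplingsIn l a t v + ∑ c ∈ (Γ.neighborFinset v).erase (Γ.stepToward o v),
      (topplingsIn l a t v - topplingsIn l a t c) < topplingsIn l a t (Γ.stepToward o v) := by
  have hp : Γ.stepToward o v ∈ Γ.neighborFinset v :=
    (mem_neighborFinset _ _ _).2 (htree.connected.stepToward_spec o hv).1
  have hcard : (((Γ.neighborFinset v).erase (Γ.stepToward o v)).card : ℤ) ≤ d - 1 := by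
    have := Finset.card_erase_add_one hp
    rw [card_neighborFinset_eq_degree] at this
    have := hdeg v
    omega
  have hfire := mul_topplingsIn_lt_sum ha ht
  rw [← Finset.add_sum_erase _ _ hp] at hfire
  rw [Finset.sum_sub_distrib, Finset.sum_const, nsmul_eq_mul]
  nlinarith [topplingsIn_nonneg (l := l) (v := v) hat]

lemma topplingsIn_lt_stepToward_of_forall_le (htree : Γ.IsTree) (hdeg : ∀ u, Γ.degree u ≤ d)
    {a t : ℕ} {v : V} (hv : v ≠ o) (hat : a ≤ t) (ha : sandConf Γ d χ o (l.take a) v ≤ d)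
    (ht : (d : ℤ) < sandConf Γ d χ o (l.take t) v)
    (hchild : ∀ c ∈ (Γ.neighborFinset v).erase (Γ.stepToward o v),
      topplingsIn l a t c ≤ topplingsIn l a t v) :
    topplingsIn l a t v < topplingsIn l a t (Γ.stepToward o v) := by
  have hsum := Finset.sum_nonneg fun c hc => sub_nonneg.2 (hchild c hc)
  linarith [htree.topplingsIn_add_sum_lt_stepToward hdeg hv hat ha ht]

lemma topplingsIn_le_stepToward (htree : Γ.IsTree) (hdeg : ∀ u, Γ.degree u ≤ d)
    (hlegal : TopplesLegally Γ d χ o l) {a t : ℕ} (ha : IsStableOffRoot Γ d χ o (l.take a))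
    (hat : a ≤ t) (ht : t ≤ l.length) {v : V} (hv : v ≠ o) :
    topplingsIn l a t v ≤ topplingsIn l a t (Γ.stepToward o v) := by
  induction t, hat using Nat.le_induction generalizing v with
  | base => simp [topplingsIn]
  | succ t hat ih =>
    have htl : t < l.length := ht
    have hpv := (htree.connected.stepToward_spec o hv).1.ne
    by_cases htv : l[t] = v
    · have hchild : ∀ c ∈ (Γ.neighborFinset v).erase (Γ.stepToward o v),
          topplingsIn l a t c ≤ topplingsIn l a t v := fun c hc => by
        obtain ⟨hco, hcv⟩ := htree.stepToward_of_adj_of_ne_stepToward hv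
          ((mem_neighborFinset _ _ _).1 (Finset.mem_of_mem_erase hc)) (Finset.ne_of_mem_erase hc)
        simpa only [hcv] using ih htl.le hco
      have hlt := htree.topplingsIn_lt_stepToward_of_forall_le hdeg hv hat (ha v hv)
        (htv ▸ hlegal t htl) hchild
      have htp : l[t] ≠ Γ.stepToward o v := by rw [htv]; exact hpv
      simp only [topplingsIn, topplings_succ htl, if_pos htv, if_neg htp] at hlt ⊢
      linarith
    · have := ih htl.le hv
      have := topplings_mono (l := l) (v := Γ.stepToward o v) t.le_succ
      simp only [topplingsIn, topplings_succ htl, if_neg htv] at *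
      linarith

lemma topplingsIn_le_root (htree : Γ.IsTree) (hdeg : ∀ u, Γ.degree u ≤ d)
    (hlegal : TopplesLegally Γ d χ o l) {a t : ℕ} (ha : IsStableOffRoot Γ d χ o (l.take a))
    (hat : a ≤ t) (ht : t ≤ l.length) (v : V) :
    topplingsIn l a t v ≤ topplingsIn l a t o := by
  induction hn : Γ.dist o v using Nat.strong_induction_on generalizing v with
  | _ n ih =>
    by_cases hv : v = o
    · rw [hv]
    · have hd := (htree.connected.stepToward_spec o hv).2
      exact (htree.topplingsIn_le_stepToward hdeg hlegal ha hat ht hv).trans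
        (ih _ (by omega) _ rfl)

lemma topplingsIn_le_of_mem_erase_stepToward (htree : Γ.IsTree) (hdeg : ∀ u, Γ.degree u ≤ d)
    (hlegal : TopplesLegally Γ d χ o l) {a t : ℕ} (ha : IsStableOffRoot Γ d χ o (l.take a))
    (hat : a ≤ t) (ht : t ≤ l.length) {v c : V} (hv : v ≠ o)
    (hc : c ∈ (Γ.neighborFinset v).erase (Γ.stepToward o v)) :
    topplingsIn l a t c ≤ topplingsIn l a t v := by
  obtain ⟨hco, hcv⟩ := htree.stepToward_of_adj_of_ne_stepToward hv
    ((mem_neighborFinset _ _ _).1 (Finset.mem_of_mem_erase hc)) (Finset.ne_of_mem_erase hc)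
  simpa only [hcv] using htree.topplingsIn_le_stepToward hdeg hlegal ha hat ht hco

lemma topplingsIn_add_one_lt_stepToward (htree : Γ.IsTree) (hdeg : ∀ u, Γ.degree u ≤ d)
    (hlegal : TopplesLegally Γ d χ o l) {a t : ℕ} (ha : IsStableOffRoot Γ d χ o (l.take a))
    (hat : a ≤ t) (ht : t < l.length) {v c : V} (htv : l[t] = v) (hv : v ≠ o)
    (hc : c ∈ (Γ.neighborFinset v).erase (Γ.stepToward o v))
    (hlag : topplingsIn l a t c < topplingsIn l a t v) :
    topplingsIn l a t v + 1 < topplingsIn l a t (Γ.stepToward o v) := by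
  have hsum := Finset.single_le_sum (f := fun c => topplingsIn l a t v - topplingsIn l a t c)
    (fun c hc => sub_nonneg.2
      (htree.topplingsIn_le_of_mem_erase_stepToward hdeg hlegal ha hat ht.le hv hc)) hc
  linarith [htree.topplingsIn_add_sum_lt_stepToward hdeg hv hat (ha v hv) (htv ▸ hlegal t ht)]

lemma topplings_eq_root_of_adj (htree : Γ.IsTree) (hdeg : ∀ u, Γ.degree u ≤ d)
    (hlegal : TopplesLegally Γ d χ o l) (hχo : χ o = d)
    (h0 : IsStableOffRoot Γ d χ o (l.take 0)) {j : ℕ} (hj : j < l.length) (hjo : l[j] = o)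
    {x : V} (hx : Γ.Adj o x) : topplings l j x = topplings l j o := by
  have hle : ∀ y ∈ Γ.neighborFinset o, 0 ≤ topplings l j o - topplings l j y := fun y _ => by
    have := htree.topplingsIn_le_root hdeg hlegal h0 (Nat.zero_le j) hj.le y
    simp only [topplingsIn, topplings_zero] at this
    linarith
  have hfire := hlegal j hj
  rw [hjo, sandConf_take, if_pos rfl, hχo] at hfire
  have hsum : ∑ y ∈ Γ.neighborFinset o, (topplings l j o - topplings l j y) ≤ 0 := by
    rw [Finset.sum_sub_distrib, Finset.sum_const, card_neighborFinset_eq_degree, nsmul_eq_mul]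
    nlinarith [hdeg o, topplings_nonneg (l := l) (v := o) j]
  have := (Finset.sum_eq_zero_iff_of_nonneg hle).1 (le_antisymm hsum (Finset.sum_nonneg hle)) x
    ((mem_neighborFinset _ _ _).2 hx)
  linarith

lemma topplingsIn_pos_of_adj_root (htree : Γ.IsTree) (hdeg : ∀ u, Γ.degree u ≤ d)
    (hlegal : TopplesLegally Γ d χ o l) (hχo : χ o = d)
    (h0 : IsStableOffRoot Γ d χ o (l.take 0)) {jp j : ℕ} (hjl : j < l.length) (hjo : l[j] = o)
    (hjpj : jp ≤ j) (hprev : 0 < topplingsIn l jp j o) {x : V} (hx : Γ.Adj o x) :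
    0 < topplingsIn l jp j x := by
  have hxj := htree.topplings_eq_root_of_adj hdeg hlegal hχo h0 hjl hjo hx
  have hxjp := htree.topplingsIn_le_root hdeg hlegal h0 (Nat.zero_le jp) (hjpj.trans hjl.le) x
  simp only [topplingsIn, topplings_zero] at hxjp hprev ⊢
  linarith

lemma topplingsIn_pos_of_topplingsIn_next_pos (htree : Γ.IsTree) (hdeg : ∀ u, Γ.degree u ≤ d)
    (hlegal : TopplesLegally Γ d χ o l) (hχo : χ o = d)
    (h0 : IsStableOffRoot Γ d χ o (l.take 0)) {jp j t : ℕ}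
    (hjp : IsStableOffRoot Γ d χ o (l.take jp)) (hj : IsStableOffRoot Γ d χ o (l.take j))
    (hjl : j < l.length) (hjo : l[j] = o) (hjpj : jp ≤ j) (hprev : topplingsIn l jp j o = 1)
    (hnext : topplingsIn l j t o ≤ 1) (ht : t ≤ l.length) {v : V} (hv : v ≠ o)
    (hvt : 0 < topplingsIn l j t v) : 0 < topplingsIn l jp j v := by
  induction hn : Γ.dist o v using Nat.strong_induction_on generalizing v with
  | _ n ih =>
    obtain ⟨hadj, hdist⟩ := htree.connected.stepToward_spec o hv
    set p := Γ.stepToward o v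
    by_contra! hvprev
    by_cases hpo : p = o
    · exact hvprev.not_gt (htree.topplingsIn_pos_of_adj_root hdeg hlegal hχo h0 hjl hjo hjpj
        (by rw [hprev]; exact one_pos) (hpo ▸ hadj.symm))
    -- `tv`: the first toppling of `v` after `j`; `s`: the first toppling of `p` after `j`
    obtain ⟨tv, htvl, hjtv, htvt, htvv, htvj⟩ :=
      exists_getElem_eq_of_topplings_lt ht le_rfl (by unfold topplingsIn at hvt; linarith)
    have hptv : 0 < topplingsIn l j tv p := by
      have := htree.topplingsIn_lt_stepToward_of_forall_le hdeg hv hjtv (hj v hv)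
        (htvv ▸ hlegal tv htvl) fun c hc =>
          htree.topplingsIn_le_of_mem_erase_stepToward hdeg hlegal hj hjtv htvl.le hv hc
      unfold topplingsIn at this ⊢
      linarith
    have hpprev : 0 < topplingsIn l jp j p := by
      refine ih _ (by omega) hpo ?_ rfl
      have := topplings_mono (l := l) (v := p) htvt.le
      unfold topplingsIn at hptv ⊢
      linarith
    obtain ⟨s, hsl, hjs, hstv, hsp, hsj⟩ :=
      exists_getElem_eq_of_topplings_lt htvl.le le_rfl (by unfold topplingsIn at hptv; linarith)
    -- from `jp` to `s`, `p` has toppled and its child `v` has not, so the grandparent must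
    -- have toppled at least three times, more often than the root
    have hlag : topplingsIn l jp s v < topplingsIn l jp s p := by
      have := topplings_mono (l := l) (v := v) hstv.le
      unfold topplingsIn at hvprev hpprev ⊢
      linarith
    have hg := htree.topplingsIn_add_one_lt_stepToward hdeg hlegal hjp (hjpj.trans hjs) hsl hsp
      hpo (htree.connected.mem_erase_stepToward_stepToward hv hpo) hlag
    have hgo := htree.topplingsIn_le_root hdeg hlegal hjp (hjpj.trans hjs) hsl.le
      (Γ.stepToward o p)
    have := topplings_mono (l := l) (v := o) (hstv.trans htvt).le
    unfold topplingsIn at *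
    linarith

end SimpleGraph.IsTree

end Sandpile

/-- On a finite tree (a subgraph of an infinite `d`-regular graph, so every degree
is at most `d`), in a toppling sequence organized into waves (the origin `o` is
toppled only when it is the only unstable vertex), every vertex other than `o`
that topples already topples in the first wave, i.e. before the second toppling
of `o`. -/
theorem stmt_10 {V : Type*} [DecidableEq V] [Fintype V]
    (Γ : SimpleGraph V) [DecidableRel Γ.Adj] (htree : Γ.IsTree)
    (d : ℕ) (hdeg : ∀ u : V, Γ.degree u ≤ d)
    (χ : V → ℤ) (hstable : IsStableConf d Set.univ χ)
    (o : V) (hχo : χ o = (d : ℤ))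
    (l : List V) (hl : IsTopplingSeq Γ d Set.univ χ o l)
    (hwaves : ∀ i : Fin l.length, l.get i = o →
      ∀ u : V, (d : ℤ) < sandConf Γ d χ o (l.take i) u → u = o)
    (w : V) (hw : w ≠ o) (hwl : w ∈ l) :
    ∃ i : Fin l.length, l.get i = w ∧ (l.take i).count o ≤ 1 := by
  have hlegal : TopplesLegally Γ d χ o l := fun t ht => hl.2.1 ⟨t, ht⟩
  have h0 : IsStableOffRoot Γ d χ o (l.take 0) := fun v hv => by
    simpa [sandConf, hv] using (hstable v trivial).2
  have hwave_start : ∀ j (hj : j < l.length), l[j] = o → IsStableOffRoot Γ d χ o (l.take j) :=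
    fun j hj hjo v hv => not_lt.1 fun h => hv (hwaves ⟨j, hj⟩ hjo v h)
  obtain ⟨i, hi, -, -, hiw, hi0⟩ := exists_getElem_eq_of_topplings_lt (l := l) (v := w) (a := 0)
    (m := 0) le_rfl topplings_zero.le (by simpa [topplings] using hwl)
  refine ⟨⟨i, hi⟩, hiw, not_lt.1 fun hK => ?_⟩
  replace hK : 2 ≤ topplings l i o := by unfold topplings; exact_mod_cast hK
  obtain ⟨j, hjl, -, hji, hjo, hjK⟩ := exists_getElem_eq_of_topplings_lt (v := o) (a := 0)
    (m := topplings l i o - 1) hi.le (by rw [topplings_zero]; linarith) (by linarith)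
  obtain ⟨jp, hjpl, -, hjpj, hjpo, hjpK⟩ := exists_getElem_eq_of_topplings_lt (v := o) (a := 0)
    (m := topplings l i o - 2) hjl.le (by rw [topplings_zero]; linarith) (by linarith)
  have hoi : topplings l (i + 1) o = topplings l i o := by
    rw [topplings_succ hi, if_neg (by rw [hiw]; exact hw), add_zero]
  have hwi : topplings l (i + 1) w = 1 := by rw [topplings_succ hi, if_pos hiw, hi0, zero_add]
  have hprev := htree.topplingsIn_pos_of_topplingsIn_next_pos hdeg hlegal hχo h0
    (hwave_start jp hjpl hjpo) (hwave_start j hjl hjo) hjl hjo hjpj.le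
    (by unfold topplingsIn; linarith) (by unfold topplingsIn; linarith) hi hw
    (by have := topplings_mono (l := l) (v := w) hji.le; unfold topplingsIn; linarith)
  have := topplings_mono (l := l) (v := w) hji.le
  have := topplings_nonneg (l := l) (v := w) jp
  unfold topplingsIn at hprev
  linarith
end

section
/- Let G be a decorated rooted subtree of the expanded cactus with origin o, χ a stable configuration with χ(o) = 3, and v_1, ..., v_k a toppling sequence for the avalanche caused by adding a grain at o. If S is a forbidden subconfiguration of χ, then no vertex v_i of the toppling sequence lies in S. -/
open SimpleGraph

/-- A forbidden subconfiguration: a nonempty vertex set `S` such that each of its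
vertices has height at most the number of its neighbors inside `S`. -/
def IsFSC {V : Type*} [DecidableEq V] [Fintype V] (Γ : SimpleGraph V)
    [DecidableRel Γ.Adj] (χ : V → ℤ) (S : Finset V) : Prop :=
  S.Nonempty ∧ ∀ u ∈ S, χ u ≤ ((S.filter fun w => Γ.Adj u w).card : ℤ)

/-!
Induct along the toppling sequence with the invariant that the vertices toppled so far are
distinct and avoid `S`. Then every neighbour of a vertex `u` has sent it at most one grain, and
`deg u + [u = o] ≤ 3`. A second toppling of `u` would start from height at most
`χ u + deg u + [u = o] - 3 ≤ χ u ≤ 3`, and a first toppling of `u ∈ S` at most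
`χ u + #(N(u) \ S) + [u = o] ≤ #(N(u) ∩ S) + #(N(u) \ S) + [u = o] ≤ 3`; neither is unstable.
-/

namespace SimpleGraph

open Finset

variable {V : Type*} [DecidableEq V] {Γ : SimpleGraph V} [DecidableRel Γ.Adj] {d : ℕ} {v : V}
  {χ : V → ℤ}

lemma sandConf_lt_of_prefix {l : List V}
    (hunst : ∀ i : Fin l.length, (d : ℤ) < sandConf Γ d χ v (l.take i) (l.get i))
    {t : List V} {a : V} (h : t ++ [a] <+: l) : (d : ℤ) < sandConf Γ d χ v t a := by
  have hlen : t.length < l.length := by simpa using h.length_le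
  have ht : l.take t.length = t :=
    (List.prefix_iff_eq_take.1 ((List.prefix_append t [a]).trans h)).symm
  have ha : l[t.length] = a := by
    simpa using (h.getElem (i := t.length) (by simp)).symm
  simpa [ht, ha] using hunst ⟨t.length, hlen⟩

variable [Fintype V]

lemma countP_adj_eq_card_of_nodup {t : List V} (ht : t.Nodup) (u : V) :
    t.countP (fun w => decide (Γ.Adj w u)) = #{w ∈ Γ.neighborFinset u | w ∈ t} := by
  rw [List.countP_eq_length_filter, ← List.toFinset_card_of_nodup (ht.filter _)]
  congr 1
  ext w
  simp [adj_comm, and_comm]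

lemma degree_add_ite_le (hdeg : ∀ u, Γ.degree u ≤ d) (hv : Γ.degree v < d) (u : V) :
    (Γ.degree u : ℤ) + (if u = v then 1 else 0) ≤ d := by
  split_ifs with huv
  · subst huv; omega
  · exact_mod_cast hdeg u

lemma notMem_of_lt_sandConf (hdeg : ∀ u, Γ.degree u ≤ d) (hv : Γ.degree v < d)
    (hχ : ∀ u, χ u ≤ d) {t : List V} (ht : t.Nodup) {a : V}
    (hunst : (d : ℤ) < sandConf Γ d χ v t a) : a ∉ t := by
  intro ha
  have hcount : t.count a = 1 := List.count_eq_one_of_mem ht ha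
  have hnbrs : #{w ∈ Γ.neighborFinset a | w ∈ t} ≤ Γ.degree a := card_filter_le _ _
  have := degree_add_ite_le hdeg hv a
  have := hχ a
  rw [sandConf, countP_adj_eq_card_of_nodup ht, hcount] at hunst
  push_cast at hunst
  omega

lemma notMem_of_lt_sandConf_of_disjoint (hdeg : ∀ u, Γ.degree u ≤ d) (hv : Γ.degree v < d)
    {S : Finset V} (hS : ∀ u ∈ S, χ u ≤ (#{w ∈ S | Γ.Adj u w} : ℤ))
    {t : List V} (ht : t.Nodup) (htS : ∀ x ∈ t, x ∉ S) {a : V} (hat : a ∉ t)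
    (hunst : (d : ℤ) < sandConf Γ d χ v t a) : a ∉ S := by
  intro haS
  have hsplit := card_filter_add_card_filter_not (s := Γ.neighborFinset a) (· ∈ S)
  have hinS : #{w ∈ Γ.neighborFinset a | w ∈ S} = #{w ∈ S | Γ.Adj a w} := by
    congr 1; ext w; simp [and_comm]
  have hout : #{w ∈ Γ.neighborFinset a | w ∈ t} ≤ #{w ∈ Γ.neighborFinset a | w ∉ S} :=
    card_le_card fun w hw => by
      simp only [mem_filter] at hw ⊢
      exact ⟨hw.1, htS w hw.2⟩
  have := degree_add_ite_le hdeg hv a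
  have := hS a haS
  rw [sandConf, countP_adj_eq_card_of_nodup ht, List.count_eq_zero_of_not_mem hat] at hunst
  rw [card_neighborFinset_eq_degree] at hsplit
  push_cast at hunst
  omega

lemma nodup_and_avoids_of_isPrefix (hdeg : ∀ u, Γ.degree u ≤ d) (hv : Γ.degree v < d)
    (hχ : ∀ u, χ u ≤ d) {S : Finset V} (hS : ∀ u ∈ S, χ u ≤ (#{w ∈ S | Γ.Adj u w} : ℤ))
    {l : List V} (hunst : ∀ i : Fin l.length, (d : ℤ) < sandConf Γ d χ v (l.take i) (l.get i))
    {t : List V} (ht : t <+: l) : t.Nodup ∧ ∀ x ∈ t, x ∉ S := by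
  induction t using List.reverseRecOn with
  | nil => simp
  | append_singleton t a ih =>
    obtain ⟨hnd, htS⟩ := ih ((List.prefix_append t [a]).trans ht)
    have hunst' := sandConf_lt_of_prefix hunst ht
    have hat := notMem_of_lt_sandConf hdeg hv hχ hnd hunst'
    have haS := notMem_of_lt_sandConf_of_disjoint hdeg hv hS hnd htS hat hunst'
    refine ⟨hnd.append (List.nodup_singleton a) (by simpa using hat), ?_⟩
    simp only [List.mem_append, List.mem_singleton]
    rintro x (hx | rfl)
    exacts [htS x hx, haS]

end SimpleGraph

theorem stmt_11_general {V : Type*} [DecidableEq V] [Fintype V]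
    (Γ : SimpleGraph V) [DecidableRel Γ.Adj]
    (hdeg : ∀ u : V, Γ.degree u ≤ 3) (o : V) (ho : Γ.degree o < 3)
    (χ : V → ℤ) (hstable : IsStableConf 3 Set.univ χ)
    (l : List V) (hl : IsTopplingSeq Γ 3 Set.univ χ o l)
    (S : Finset V) (hS : IsFSC Γ χ S) :
    ∀ u ∈ l, u ∉ S :=
  (nodup_and_avoids_of_isPrefix hdeg ho (fun u => (hstable u trivial).2) hS.2 hl.2.1
    (List.prefix_refl l)).2

/-- On a decorated rooted subtree of the expanded cactus (a finite graph of maximum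
degree 3 whose origin/root `o` has degree less than 3), if `χ` is stable with
`χ o = 3` and `S` is a forbidden subconfiguration, then no vertex of a toppling
sequence for the avalanche caused by adding a grain at `o` lies in `S`. -/
theorem stmt_11 {V : Type*} [DecidableEq V] [Fintype V]
    (Γ : SimpleGraph V) [DecidableRel Γ.Adj]
    (hdeg : ∀ u : V, Γ.degree u ≤ 3) (o : V) (ho : Γ.degree o < 3)
    (χ : V → ℤ) (hstable : IsStableConf 3 Set.univ χ) (hχo : χ o = 3)
    (l : List V) (hl : IsTopplingSeq Γ 3 Set.univ χ o l)
    (S : Finset V) (hS : IsFSC Γ χ S) :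
    ∀ u ∈ l, u ∉ S :=
  stmt_11_general Γ hdeg o ho χ hstable l hl S hS
end

section
/- Let a_n be the n-th power series coefficient of f(x) = (1 - 8x - sqrt((1-20x)(1+4x)))/(6x) at 0. Then there exist positive constants C_1, C_2 and N such that for all n > N, C_1 * 20^n * n^{-3/2} ≤ a_n ≤ C_2 * 20^n * n^{-3/2}. -/
/-!
Factor `√((1 - 20x)(1 + 4x)) = √(1 + 4x) · √(1 - 20x)` and expand both factors by the binomial
series: `√(1 - y) = -∑ c_k y^k` with `c_k = C(2k,k) / ((2k - 1) 4^k)`, and Wallis-type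
inequalities for `C(2k,k)` give `k^{-3/2} / 4 ≤ c_k ≤ k^{-3/2}` for `k ≥ 1`. Comparing
coefficients on a punctured disc gives `6 a_n = s_{n+1}` for `n ≥ 1`, where `s_m` is the `m`-th
coefficient of `-√((1 - 20x)(1 + 4x))`. In the Cauchy product
`s_m = ∑_j (1/2 choose j) 4^j · 20^{m-j} c_{m-j}` the term `j = 0` is of order `20^m m^{-3/2}`,
the term `j = 1` is positive, and since `j^{-3/2} (m - j)^{-3/2} ≤ 3 m^{-3/2}` the `j`-th term is
at most `3 · 5^{-j} · 20^m m^{-3/2}`; summing this geometric tail pins `s_m` between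
`20^m m^{-3/2} / 10` and `2 · 20^m m^{-3/2}`.
-/

open Filter Topology Finset

theorem eq_of_forall_hasSum_mul_pow {𝕜 : Type*} [NontriviallyNormedField 𝕜] [CompleteSpace 𝕜]
    {c d : ℕ → 𝕜} {F : 𝕜 → 𝕜} {δ : ℝ} (hδ : 0 < δ)
    (hc : ∀ x : 𝕜, 0 < ‖x‖ → ‖x‖ < δ → HasSum (fun n => c n * x ^ n) (F x))
    (hd : ∀ x : 𝕜, 0 < ‖x‖ → ‖x‖ < δ → HasSum (fun n => d n * x ^ n) (F x)) : c = d := by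
  rw [← sub_eq_zero]
  have h (x : 𝕜) (hx : 0 < ‖x‖) (hxδ : ‖x‖ < δ) : HasSum (fun n => (c - d) n * x ^ n) 0 := by
    simpa only [Pi.sub_apply, sub_mul, sub_self] using (hc x hx hxδ).sub (hd x hx hxδ)
  set p := FormalMultilinearSeries.ofScalars 𝕜 (c - d)
  have hp_apply (x : 𝕜) (n : ℕ) : p n (fun _ => x) = (c - d) n * x ^ n :=
    FormalMultilinearSeries.ofScalars_apply_eq (c - d) x n
  obtain ⟨x₀, hx₀, hx₀δ⟩ := NormedField.exists_norm_lt 𝕜 hδ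
  have hr : (‖x₀‖₊ : ENNReal) ≤ p.radius := by
    refine p.le_radius_of_tendsto (l := 0) ?_
    simpa [p, FormalMultilinearSeries.ofScalars_norm, norm_mul, norm_pow]
      using (h x₀ hx₀ hx₀δ).summable.tendsto_atTop_zero.norm
  have hp := p.hasFPowerSeriesOnBall (lt_of_lt_of_le (by simpa using hx₀) hr)
  have hsum : ∀ᶠ x in 𝓝[≠] 0, p.sum x = 0 := by
    have hball : Metric.ball (0 : 𝕜) (min δ ‖x₀‖) ∈ 𝓝 (0 : 𝕜) :=
      Metric.ball_mem_nhds 0 (lt_min hδ hx₀)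
    filter_upwards [inter_mem_nhdsWithin _ hball] with x ⟨hx0, hx⟩
    rw [mem_ball_zero_iff, lt_min_iff] at hx
    have hx' : x ∈ Metric.eball (0 : 𝕜) p.radius := by
      refine lt_of_lt_of_le ?_ hr
      simpa [edist_zero_right, ← NNReal.coe_lt_coe] using hx.2
    have := hp.hasSum hx'
    simp only [hp_apply, zero_add] at this
    exact this.unique (h x (norm_pos_iff.2 hx0) hx.1)
  have hzero : p.sum =ᶠ[𝓝 0] 0 :=
    hp.analyticAt.eventually_eq_zero_or_eventually_ne_zero.resolve_right fun hne =>
      (hsum.and hne).exists.elim fun _ hx => hx.2 hx.1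
  exact (FormalMultilinearSeries.ofScalars_series_eq_zero 𝕜).1
    (hp.hasFPowerSeriesAt.eq_zero_of_eventually hzero)

theorem hasSum_mul_pow_cauchyProduct {R : Type*} [NormedCommRing R] [CompleteSpace R]
    {a b : ℕ → R} {x A B : R}
    (ha : HasSum (fun n => a n * x ^ n) A) (hb : HasSum (fun n => b n * x ^ n) B)
    (ha' : Summable fun n => ‖a n * x ^ n‖) (hb' : Summable fun n => ‖b n * x ^ n‖) :
    HasSum (fun n => (∑ k ∈ range (n + 1), a k * b (n - k)) * x ^ n) (A * B) := by
  convert hasSum_sum_range_mul_of_summable_norm ha' hb' using 1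
  · ext n
    rw [sum_mul]
    refine sum_congr rfl fun k hk => ?_
    rw [← pow_mul_pow_sub x (Nat.le_of_lt_succ (mem_range.1 hk))]
    ring
  · rw [ha.tsum_eq, hb.tsum_eq]

theorem Nat.two_mul_add_one_mul_centralBinom_sq_le (k : ℕ) :
    (2 * k + 1) * k.centralBinom ^ 2 ≤ 16 ^ k := by
  induction k with
  | zero => simp
  | succ k ih =>
    refine Nat.le_of_mul_le_mul_left (c := (k + 1) ^ 2) ?_ (by positivity)
    calc (k + 1) ^ 2 * ((2 * (k + 1) + 1) * (k + 1).centralBinom ^ 2)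
        = (2 * k + 3) * ((k + 1) * (k + 1).centralBinom) ^ 2 := by ring
      _ = 4 * (2 * k + 1) * (2 * k + 3) * ((2 * k + 1) * k.centralBinom ^ 2) := by
        rw [Nat.succ_mul_centralBinom_succ]; ring
      _ ≤ 16 * (k + 1) ^ 2 * 16 ^ k := Nat.mul_le_mul (by nlinarith) ih
      _ = (k + 1) ^ 2 * 16 ^ (k + 1) := by ring

theorem Nat.sixteen_pow_le_four_mul_mul_centralBinom_sq {k : ℕ} (hk : 1 ≤ k) :
    16 ^ k ≤ 4 * k * k.centralBinom ^ 2 := by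
  induction k, hk using Nat.le_induction with
  | base => decide
  | succ k _ ih =>
    refine Nat.le_of_mul_le_mul_left (c := (k + 1) ^ 2) ?_ (by positivity)
    calc (k + 1) ^ 2 * 16 ^ (k + 1) = 16 * (k + 1) ^ 2 * 16 ^ k := by ring
      _ ≤ 16 * (k + 1) ^ 2 * (4 * k * k.centralBinom ^ 2) := Nat.mul_le_mul_left _ ih
      _ ≤ 16 * (k + 1) * (2 * k + 1) ^ 2 * k.centralBinom ^ 2 := by
        rw [show 16 * (k + 1) ^ 2 * (4 * k * k.centralBinom ^ 2)
          = 16 * (k + 1) * (4 * k * (k + 1)) * k.centralBinom ^ 2 by ring]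
        gcongr
        nlinarith
      _ = (k + 1) ^ 2 * (4 * (k + 1) * (k + 1).centralBinom ^ 2) := by
        rw [show (k + 1) ^ 2 * (4 * (k + 1) * (k + 1).centralBinom ^ 2)
          = 4 * (k + 1) * ((k + 1) * (k + 1).centralBinom) ^ 2 by ring,
          Nat.succ_mul_centralBinom_succ]
        ring

theorem rpow_neg_three_halves_sq {x : ℝ} (hx : 0 ≤ x) : (x ^ (-(3 : ℝ) / 2)) ^ 2 = (x ^ 3)⁻¹ := by
  rw [← Real.rpow_mul_natCast hx, ← Real.rpow_natCast, ← Real.rpow_neg hx]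
  norm_num

theorem rpow_neg_three_halves_mul_le {x y : ℝ} (hx : 1 ≤ x) (hy : 1 ≤ y) :
    x ^ (-(3 : ℝ) / 2) * y ^ (-(3 : ℝ) / 2) ≤ 3 * (x + y) ^ (-(3 : ℝ) / 2) := by
  rw [← Real.mul_rpow (by positivity) (by positivity),
    ← pow_le_pow_iff_left₀ (by positivity) (by positivity) two_ne_zero, mul_pow,
    rpow_neg_three_halves_sq (by positivity), rpow_neg_three_halves_sq (by positivity)]
  have hsum : x + y ≤ 2 * (x * y) := by nlinarith
  have hcube : (x + y) ^ 3 ≤ 9 * (x * y) ^ 3 := by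
    calc (x + y) ^ 3 ≤ (2 * (x * y)) ^ 3 := by gcongr
      _ ≤ 9 * (x * y) ^ 3 := by nlinarith [pow_pos (by positivity : 0 < x * y) 3]
  rw [← div_eq_mul_inv, le_div_iff₀ (by positivity), inv_mul_le_iff₀ (by positivity)]
  linarith

/-- `-sqrtCoeff k` is the `k`-th Taylor coefficient of `√(1 - y)`. -/
noncomputable def sqrtCoeff (k : ℕ) : ℝ := k.centralBinom / ((2 * k - 1) * 4 ^ k)

theorem sqrtCoeff_zero : sqrtCoeff 0 = -1 := by
  simp [sqrtCoeff]

theorem two_mul_natCast_sub_one_ne_zero (k : ℕ) : (2 * k - 1 : ℝ) ≠ 0 := by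
  rw [sub_ne_zero]
  exact_mod_cast (by omega : 2 * k ≠ 1)

theorem succ_mul_sqrtCoeff_succ (k : ℕ) :
    (k + 1) * sqrtCoeff (k + 1) = (k - 1 / 2) * sqrtCoeff k := by
  have h : ((k : ℝ) + 1) * (k + 1).centralBinom = 2 * (2 * k + 1) * k.centralBinom := by
    exact_mod_cast Nat.succ_mul_centralBinom_succ k
  have hk := two_mul_natCast_sub_one_ne_zero k
  have hk' : (2 * k + 1 : ℝ) ≠ 0 := by positivity
  rw [sqrtCoeff, sqrtCoeff, Nat.cast_succ, show 2 * ((k : ℝ) + 1) - 1 = 2 * k + 1 by ring,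
    mul_div_assoc', h]
  field_simp
  ring

theorem Ring.choose_one_half (k : ℕ) : Ring.choose (1 / 2 : ℝ) k = (-1) ^ (k + 1) * sqrtCoeff k := by
  induction k with
  | zero => simp [sqrtCoeff_zero]
  | succ k ih =>
    have h := Ring.choose_smul_choose (1 / 2 : ℝ) (n := k + 1) (k := k) (by omega)
    rw [Nat.choose_succ_self_right, nsmul_eq_mul, Nat.add_sub_cancel_left, Ring.choose_one_right,
      ih, Nat.cast_succ] at h
    refine mul_left_cancel₀ (Nat.cast_add_one_ne_zero k) ?_
    rw [h, mul_left_comm, succ_mul_sqrtCoeff_succ]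
    ring

theorem sqrtCoeff_pos {k : ℕ} (hk : 1 ≤ k) : 0 < sqrtCoeff k := by
  have hk1 : (1 : ℝ) ≤ k := by exact_mod_cast hk
  have h2k : (0 : ℝ) < 2 * k - 1 := by linarith
  have hC := Nat.centralBinom_pos k
  unfold sqrtCoeff
  positivity

theorem abs_choose_one_half {k : ℕ} (hk : 1 ≤ k) : |Ring.choose (1 / 2 : ℝ) k| = sqrtCoeff k := by
  rw [Ring.choose_one_half, abs_mul, abs_pow, abs_neg, abs_one, one_pow, one_mul,
    abs_of_pos (sqrtCoeff_pos hk)]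

theorem choose_one_half_mul_neg_pow (k : ℕ) (y : ℝ) :
    Ring.choose (1 / 2 : ℝ) k * (-y) ^ k = -(sqrtCoeff k * y ^ k) := by
  have h : ((-1 : ℝ)) ^ k * (-1) ^ k = 1 := by rw [← mul_pow]; norm_num
  rw [Ring.choose_one_half, neg_pow]
  linear_combination (-(sqrtCoeff k * y ^ k)) * h

theorem sqrtCoeff_sq (k : ℕ) :
    sqrtCoeff k ^ 2 = k.centralBinom ^ 2 / ((2 * k - 1) ^ 2 * 16 ^ k) := by
  rw [sqrtCoeff, div_pow, mul_pow, ← pow_mul, mul_comm k, pow_mul]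
  norm_num

theorem sqrtCoeff_le_rpow {k : ℕ} (hk : 1 ≤ k) : sqrtCoeff k ≤ (k : ℝ) ^ (-(3 : ℝ) / 2) := by
  have hk1 : (1 : ℝ) ≤ k := by exact_mod_cast hk
  have hC : ((2 * k + 1) * k.centralBinom ^ 2 : ℝ) ≤ 16 ^ k := by
    exact_mod_cast Nat.two_mul_add_one_mul_centralBinom_sq_le k
  have h2k : (0 : ℝ) < 2 * k - 1 := by linarith
  have hcube : (k : ℝ) ^ 3 ≤ (2 * k - 1) ^ 2 * (2 * k + 1) := by nlinarith
  rw [← pow_le_pow_iff_left₀ (sqrtCoeff_pos hk).le (by positivity) two_ne_zero, sqrtCoeff_sq,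
    rpow_neg_three_halves_sq (by positivity), ← one_div,
    div_le_div_iff₀ (by positivity) (by positivity)]
  calc (k.centralBinom : ℝ) ^ 2 * (k : ℝ) ^ 3
      ≤ k.centralBinom ^ 2 * ((2 * (k : ℝ) - 1) ^ 2 * (2 * k + 1)) := by gcongr
    _ = (2 * (k : ℝ) - 1) ^ 2 * ((2 * k + 1) * k.centralBinom ^ 2) := by ring
    _ ≤ 1 * ((2 * (k : ℝ) - 1) ^ 2 * 16 ^ k) := by rw [one_mul]; gcongr

theorem rpow_le_four_mul_sqrtCoeff {k : ℕ} (hk : 1 ≤ k) :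
    (k : ℝ) ^ (-(3 : ℝ) / 2) ≤ 4 * sqrtCoeff k := by
  have hk1 : (1 : ℝ) ≤ k := by exact_mod_cast hk
  have h2k : (0 : ℝ) < 2 * k - 1 := by linarith
  have hC : (16 ^ k : ℝ) ≤ 4 * k * k.centralBinom ^ 2 := by
    exact_mod_cast Nat.sixteen_pow_le_four_mul_mul_centralBinom_sq hk
  rw [← pow_le_pow_iff_left₀ (by positivity) (by linarith [sqrtCoeff_pos hk]) two_ne_zero, mul_pow,
    sqrtCoeff_sq, rpow_neg_three_halves_sq (by positivity), ← one_div, mul_div_assoc',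
    div_le_div_iff₀ (by positivity) (by positivity)]
  calc 1 * ((2 * (k : ℝ) - 1) ^ 2 * 16 ^ k) ≤ (2 * (k : ℝ)) ^ 2 * (4 * k * k.centralBinom ^ 2) := by
        rw [one_mul]; gcongr; linarith
    _ = 4 ^ 2 * k.centralBinom ^ 2 * (k : ℝ) ^ 3 := by ring

theorem hasSum_choose_one_half_mul_pow {y : ℝ} (hy : |y| < 1) :
    HasSum (fun k => Ring.choose (1 / 2 : ℝ) k * y ^ k) (√(1 + y)) := by
  have hy' : y ∈ Metric.eball (0 : ℝ) 1 := by
    simpa [edist_zero_right, Real.enorm_eq_ofReal_abs] using hy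
  have := (Real.one_add_rpow_hasFPowerSeriesOnBall_zero (a := 1 / 2)).hasSum hy'
  rw [Real.sqrt_eq_rpow]
  simpa [binomialSeries, FormalMultilinearSeries.ofScalars_apply_eq, mul_comm] using this

theorem summable_norm_choose_one_half_mul_pow {y : ℝ} (hy : |y| < 1) :
    Summable fun k => ‖Ring.choose (1 / 2 : ℝ) k * y ^ k‖ := by
  have hy' : y ∈ Metric.eball (0 : ℝ) (binomialSeries ℝ (1 / 2 : ℝ)).radius :=
    lt_of_lt_of_le (by simpa [edist_zero_right, Real.enorm_eq_ofReal_abs] using hy)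
      Real.one_add_rpow_hasFPowerSeriesOnBall_zero.r_le
  simpa [binomialSeries, FormalMultilinearSeries.ofScalars_apply_eq, mul_comm]
    using (binomialSeries ℝ (1 / 2 : ℝ)).summable_norm_apply hy'

noncomputable def discRootCoeff (m : ℕ) : ℝ :=
  ∑ j ∈ range (m + 1), Ring.choose (1 / 2 : ℝ) j * 4 ^ j * (sqrtCoeff (m - j) * 20 ^ (m - j))

theorem hasSum_discRootCoeff {x : ℝ} (hx : |x| < 1 / 20) :
    HasSum (fun m => discRootCoeff m * x ^ m) (-√((1 - 20 * x) * (1 + 4 * x))) := by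
  have h4 : |4 * x| < 1 := by rw [abs_mul]; norm_num; linarith
  have h20 : |-(20 * x)| < 1 := by rw [abs_neg, abs_mul]; norm_num; linarith
  have hpos (y : ℝ) (k : ℕ) : Ring.choose (1 / 2 : ℝ) k * y ^ k * x ^ k
      = Ring.choose (1 / 2 : ℝ) k * (y * x) ^ k := by ring
  have hneg (k : ℕ) : sqrtCoeff k * 20 ^ k * x ^ k
      = -(Ring.choose (1 / 2 : ℝ) k * (-(20 * x)) ^ k) := by
    rw [choose_one_half_mul_neg_pow]; ring
  have := hasSum_mul_pow_cauchyProduct (x := x)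
    (a := fun j => Ring.choose (1 / 2 : ℝ) j * 4 ^ j) (b := fun k => sqrtCoeff k * 20 ^ k)
    (by simpa only [hpos] using hasSum_choose_one_half_mul_pow h4)
    (by simpa only [hneg] using (hasSum_choose_one_half_mul_pow h20).neg)
    (by simpa only [hpos] using summable_norm_choose_one_half_mul_pow h4)
    (by simpa only [hneg, norm_neg] using summable_norm_choose_one_half_mul_pow h20)
  rwa [Real.sqrt_mul (by cases abs_lt.1 hx; linarith), sub_eq_add_neg, mul_comm, ← mul_neg]

theorem discRootCoeff_zero : discRootCoeff 0 = -1 := by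
  simp [discRootCoeff, sqrtCoeff_zero]

theorem hasSum_six_mul_sub_discRootCoeff {a : ℕ → ℝ} {x : ℝ} (hx0 : x ≠ 0) (hx : |x| < 1 / 20)
    (ha : HasSum (fun n => a n * x ^ n)
      ((1 - 8 * x - √((1 - 20 * x) * (1 + 4 * x))) / (6 * x))) :
    HasSum (fun n => (6 * a n - discRootCoeff (n + 1)) * x ^ n) (-8) := by
  have hs := (hasSum_nat_add_iff' 1).2 (hasSum_discRootCoeff hx)
  simp only [range_one, sum_singleton, pow_zero, mul_one, discRootCoeff_zero] at hs
  have hterm : (fun n => (6 * a n - discRootCoeff (n + 1)) * x ^ n)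
      = fun n => 6 * (a n * x ^ n) - discRootCoeff (n + 1) * x ^ (n + 1) * x⁻¹ := by
    ext n
    field_simp
    ring
  have hsum : (-8 : ℝ) = 6 * ((1 - 8 * x - √((1 - 20 * x) * (1 + 4 * x))) / (6 * x))
      - (-√((1 - 20 * x) * (1 + 4 * x)) - -1) * x⁻¹ := by
    field_simp
    ring
  rw [hterm, hsum]
  exact (ha.mul_left 6).sub (hs.mul_right x⁻¹)

theorem abs_choose_one_half_mul_sqrtCoeff_le {i j : ℕ} (hj : 1 ≤ j) :
    |Ring.choose (1 / 2 : ℝ) j * 4 ^ j * (sqrtCoeff i * 20 ^ i)|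
      ≤ 3 * (20 ^ (j + i) * ((j + i : ℕ) : ℝ) ^ (-(3 : ℝ) / 2)) * (1 / 5) ^ j := by
  have hpow : (4 : ℝ) ^ j * 20 ^ i = 20 ^ (j + i) * (1 / 5) ^ j := by
    rw [pow_add, show (4 : ℝ) = 20 * (1 / 5) by norm_num, mul_pow]
    ring
  have hj' : (1 : ℝ) ≤ j := by exact_mod_cast hj
  rw [abs_mul, abs_mul, abs_choose_one_half hj, abs_of_pos (by positivity : (0 : ℝ) < 4 ^ j)]
  rcases Nat.eq_zero_or_pos i with rfl | hi
  · rw [sqrtCoeff_zero, pow_zero, mul_one, abs_neg, abs_one, mul_one, add_zero]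
    rw [pow_zero, mul_one, add_zero] at hpow
    have hp : 0 ≤ (j : ℝ) ^ (-(3 : ℝ) / 2) * (20 ^ j * (1 / 5) ^ j) := by positivity
    calc sqrtCoeff j * 4 ^ j ≤ (j : ℝ) ^ (-(3 : ℝ) / 2) * (20 ^ j * (1 / 5) ^ j) := by
          rw [← hpow]; gcongr; exact sqrtCoeff_le_rpow hj
      _ ≤ _ := by linarith
  · have hi' : (1 : ℝ) ≤ i := by exact_mod_cast hi
    rw [abs_of_pos (by have := sqrtCoeff_pos hi; positivity)]
    calc sqrtCoeff j * 4 ^ j * (sqrtCoeff i * 20 ^ i)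
        = (sqrtCoeff j * sqrtCoeff i) * (4 ^ j * 20 ^ i) := by ring
      _ ≤ ((j : ℝ) ^ (-(3 : ℝ) / 2) * (i : ℝ) ^ (-(3 : ℝ) / 2)) * (4 ^ j * 20 ^ i) := by
          refine mul_le_mul_of_nonneg_right ?_ (by positivity)
          exact mul_le_mul (sqrtCoeff_le_rpow hj) (sqrtCoeff_le_rpow hi)
            (sqrtCoeff_pos hi).le (by positivity)
      _ ≤ 3 * ((j : ℝ) + i) ^ (-(3 : ℝ) / 2) * (4 ^ j * 20 ^ i) := by
          exact mul_le_mul_of_nonneg_right (rpow_neg_three_halves_mul_le hj' hi') (by positivity)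
      _ = _ := by rw [hpow]; push_cast; ring

theorem abs_sum_Ico_choose_one_half_mul_sqrtCoeff_le {m a : ℕ} (ha : 1 ≤ a) :
    |∑ j ∈ Ico a (m + 1), Ring.choose (1 / 2 : ℝ) j * 4 ^ j * (sqrtCoeff (m - j) * 20 ^ (m - j))|
      ≤ 3 * (20 ^ m * (m : ℝ) ^ (-(3 : ℝ) / 2)) * ((1 / 5) ^ a / (1 - 1 / 5)) := by
  calc _ ≤ ∑ j ∈ Ico a (m + 1), 3 * (20 ^ m * (m : ℝ) ^ (-(3 : ℝ) / 2)) * (1 / 5) ^ j := by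
        refine (abs_sum_le_sum_abs _ _).trans (sum_le_sum fun j hj => ?_)
        obtain ⟨haj, hjm⟩ := mem_Ico.1 hj
        have := abs_choose_one_half_mul_sqrtCoeff_le (i := m - j) (by omega : 1 ≤ j)
        rwa [Nat.add_sub_cancel' (by omega : j ≤ m)] at this
    _ ≤ _ := by
        rw [← mul_sum]
        gcongr
        exact geom_sum_Ico_le_of_lt_one (by norm_num) (by norm_num)

theorem discRootCoeff_bounds {m : ℕ} (hm : 2 ≤ m) :
    20 ^ m * (m : ℝ) ^ (-(3 : ℝ) / 2) / 10 ≤ discRootCoeff m ∧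
      discRootCoeff m ≤ 2 * (20 ^ m * (m : ℝ) ^ (-(3 : ℝ) / 2)) := by
  set t : ℕ → ℝ := fun j => Ring.choose (1 / 2 : ℝ) j * 4 ^ j * (sqrtCoeff (m - j) * 20 ^ (m - j))
  have hm1 : 1 ≤ m := by omega
  have hsplit₁ : discRootCoeff m = t 0 + ∑ j ∈ Ico 1 (m + 1), t j := by
    rw [discRootCoeff, range_eq_Ico, sum_eq_sum_Ico_succ_bot (by omega)]
  have hsplit₂ : discRootCoeff m = t 0 + (t 1 + ∑ j ∈ Ico 2 (m + 1), t j) := by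
    rw [hsplit₁, sum_eq_sum_Ico_succ_bot (by omega)]
  have ht₀ : t 0 = 20 ^ m * sqrtCoeff m := by simp [t, mul_comm]
  have h20 : (0 : ℝ) ≤ 20 ^ m := by positivity
  have hlow₀ := mul_le_mul_of_nonneg_left (rpow_le_four_mul_sqrtCoeff hm1) h20
  have hupp₀ := mul_le_mul_of_nonneg_left (sqrtCoeff_le_rpow hm1) h20
  set P := 20 ^ m * (m : ℝ) ^ (-(3 : ℝ) / 2)
  have ht₁ : 0 ≤ t 1 := by
    have := sqrtCoeff_pos (show 1 ≤ m - 1 by omega)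
    simp only [t, Ring.choose_one_right]
    positivity
  have htail₁ : |∑ j ∈ Ico 1 (m + 1), t j| ≤ 3 * P * ((1 / 5) ^ 1 / (1 - 1 / 5)) :=
    abs_sum_Ico_choose_one_half_mul_sqrtCoeff_le le_rfl
  have htail₂ : |∑ j ∈ Ico 2 (m + 1), t j| ≤ 3 * P * ((1 / 5) ^ 2 / (1 - 1 / 5)) :=
    abs_sum_Ico_choose_one_half_mul_sqrtCoeff_le one_le_two
  rw [show ((1 : ℝ) / 5) ^ 1 / (1 - 1 / 5) = 1 / 4 by norm_num] at htail₁
  rw [show ((1 : ℝ) / 5) ^ 2 / (1 - 1 / 5) = 1 / 20 by norm_num] at htail₂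
  constructor
  · linarith [(abs_le.1 htail₂).1]
  · linarith [(abs_le.1 htail₁).2]

/-- If `a n` are the power-series coefficients at `0` of
`f(x) = (1 - 8x - √((1-20x)(1+4x)))/(6x)`, then `a n` is asymptotically of order
`20^n · n^{-3/2}`. -/
theorem stmt_14 (a : ℕ → ℝ)
    (ha : ∃ ε > (0 : ℝ), ∀ x : ℝ, 0 < |x| → |x| < ε →
      HasSum (fun n => a n * x ^ n)
        ((1 - 8 * x - Real.sqrt ((1 - 20 * x) * (1 + 4 * x))) / (6 * x))) :
    ∃ C₁ > (0 : ℝ), ∃ C₂ > (0 : ℝ), ∃ N : ℕ, ∀ n : ℕ, n > N →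
      C₁ * 20 ^ n * (n : ℝ) ^ (-(3 : ℝ) / 2) ≤ a n ∧
      a n ≤ C₂ * 20 ^ n * (n : ℝ) ^ (-(3 : ℝ) / 2) := by
  obtain ⟨ε, hε, ha⟩ := ha
  have hcoeff : (fun n => 6 * a n - discRootCoeff (n + 1)) = (Pi.single 0 (-8) : ℕ → ℝ) := by
    refine eq_of_forall_hasSum_mul_pow (F := fun _ => -8) (lt_min hε (by norm_num : (0 : ℝ) < 1 / 20))
      (fun x hx hxδ => ?_) (fun x _ _ => ?_)
    · rw [Real.norm_eq_abs] at hx hxδ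
      rw [lt_min_iff] at hxδ
      exact hasSum_six_mul_sub_discRootCoeff (abs_pos.1 hx) hxδ.2 (ha x hx hxδ.1)
    · simpa using hasSum_single 0 (f := fun n => (Pi.single 0 (-8) : ℕ → ℝ) n * x ^ n)
        (fun n hn => by simp [hn])
  refine ⟨1 / 9, by norm_num, 7, by norm_num, 0, fun n hn => ?_⟩
  have ha_n : a n = discRootCoeff (n + 1) / 6 := by
    have := congrFun hcoeff n
    simp only [Pi.single_apply, if_neg (Nat.pos_iff_ne_zero.1 hn)] at this
    linarith
  obtain ⟨hlow, hupp⟩ := discRootCoeff_bounds (m := n + 1) (by omega)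
  have hn1 : (1 : ℝ) ≤ n := by exact_mod_cast hn
  have hmono : ((n + 1 : ℕ) : ℝ) ^ (-(3 : ℝ) / 2) ≤ (n : ℝ) ^ (-(3 : ℝ) / 2) :=
    Real.rpow_le_rpow_of_nonpos (by positivity) (by push_cast; linarith) (by norm_num)
  have hshift : (n : ℝ) ^ (-(3 : ℝ) / 2) ≤ 3 * ((n + 1 : ℕ) : ℝ) ^ (-(3 : ℝ) / 2) := by
    simpa using rpow_neg_three_halves_mul_le hn1 le_rfl
  have h20 : (0 : ℝ) < 20 ^ n := by positivity
  rw [ha_n]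
  rw [pow_succ] at hlow hupp
  constructor
  · nlinarith [mul_le_mul_of_nonneg_left hshift h20.le]
  · nlinarith [mul_le_mul_of_nonneg_left hmono h20.le]
end
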